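/- arXiv:1910.11955 — 2 statements merged into one kernel-verified Lean document; each statement's English description precedes it below -/
import Mathlib

section
/- The formal power series G(q) = sum over n >= 0 of ((5n)!/(n!)^5) q^n in Q[[q]] satisfies theta^4 G = 5 q (5 theta + 1)(5 theta + 2)(5 theta + 3)(5 theta + 4) G, where theta = q * d/dq. -/
open PowerSeries

/-- The logarithmic derivation `θ = q d/dq` on `ℚ[[q]]`, acting by `θ(q^n) = n q^n`. -/
noncomputable def theta (f : PowerSeries ℚ) : PowerSeries ℚ :=
  PowerSeries.mk fun n => (n : ℚ) * PowerSeries.coeff n f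

/-- The operator `5θ + k` on `ℚ[[q]]`. -/
noncomputable def op5 (k : ℕ) (f : PowerSeries ℚ) : PowerSeries ℚ :=
  5 • theta f + (k : ℚ) • f

/-! Since `θ` acts diagonally on monomials, `θ⁴ G = 5q(5θ+1)⋯(5θ+4) G` compares the coefficient
of `q^(n+1)` on the left with that of `q^n` on the right, so it is equivalent to the recurrence
`(n+1)^4 a(n+1) = 5(5n+1)(5n+2)(5n+3)(5n+4) a(n)`, which for `a(n) = (5n)!/(n!)^5` follows
from `a(n+1)/a(n) = (5n+1)⋯(5n+5)/(n+1)^5`. -/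

open scoped Nat

@[simp]
lemma coeff_theta (n : ℕ) (f : PowerSeries ℚ) : coeff n (theta f) = n * coeff n f := by
  simp [theta]

@[simp]
lemma coeff_op5 (k n : ℕ) (f : PowerSeries ℚ) :
    coeff n (op5 k f) = (5 * n + k) * coeff n f := by
  simp only [op5, map_add, map_nsmul, map_smul, coeff_theta, smul_eq_mul]
  ring

lemma coeff_succ_theta_four (n : ℕ) (f : PowerSeries ℚ) :
    coeff (n + 1) (theta (theta (theta (theta f)))) = ((n : ℚ) + 1) ^ 4 * coeff (n + 1) f := by
  simp only [coeff_theta]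
  push_cast
  ring

lemma coeff_succ_smul_X_mul_op5 (n : ℕ) (f : PowerSeries ℚ) :
    coeff (n + 1) (5 • (X * op5 1 (op5 2 (op5 3 (op5 4 f))))) =
      5 * ((5 * n + 1) * (5 * n + 2) * (5 * n + 3) * (5 * n + 4)) * coeff n f := by
  rw [map_nsmul, coeff_succ_X_mul]
  simp only [coeff_op5, nsmul_eq_mul]
  push_cast
  ring

theorem theta_four_eq_iff_coeff_recurrence (f : PowerSeries ℚ) :
    theta (theta (theta (theta f))) = 5 • (X * op5 1 (op5 2 (op5 3 (op5 4 f)))) ↔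
      ∀ n : ℕ, ((n : ℚ) + 1) ^ 4 * coeff (n + 1) f =
        5 * ((5 * n + 1) * (5 * n + 2) * (5 * n + 3) * (5 * n + 4)) * coeff n f := by
  simp only [PowerSeries.ext_iff, ← coeff_succ_theta_four, ← coeff_succ_smul_X_mul_op5]
  constructor
  · exact fun h n => h (n + 1)
  · rintro h (_ | n)
    · simp
    · exact h n

lemma factorial_five_mul_succ (n : ℕ) :
    (5 * (n + 1))! = (5 * n + 1) * (5 * n + 2) * (5 * n + 3) * (5 * n + 4) * (5 * n + 5) *
      (5 * n)! := by
  rw [show 5 * (n + 1) = 5 * n + 4 + 1 by ring]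
  simp only [Nat.factorial_succ]
  ring

lemma factorial_five_mul_div_pow_succ (n : ℕ) :
    ((n : ℚ) + 1) ^ 4 * ((5 * (n + 1))! / ((n + 1)! : ℚ) ^ 5) =
      5 * ((5 * n + 1) * (5 * n + 2) * (5 * n + 3) * (5 * n + 4)) *
        ((5 * n)! / (n ! : ℚ) ^ 5) := by
  rw [factorial_five_mul_succ, Nat.factorial_succ]
  push_cast
  field_simp

/-- `G(q) = ∑ ((5n)!/(n!)^5) q^n` satisfies
`θ^4 G = 5 q (5θ+1)(5θ+2)(5θ+3)(5θ+4) G`. -/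
theorem quintic_picard_fuchs :
    theta (theta (theta (theta (PowerSeries.mk fun n : ℕ =>
        (Nat.factorial (5 * n) : ℚ) / (Nat.factorial n : ℚ) ^ 5)))) =
      5 • (PowerSeries.X *
        op5 1 (op5 2 (op5 3 (op5 4 (PowerSeries.mk fun n : ℕ =>
          (Nat.factorial (5 * n) : ℚ) / (Nat.factorial n : ℚ) ^ 5))))) := by
  rw [theta_four_eq_iff_coeff_recurrence]
  intro n
  simpa only [coeff_mk] using factorial_five_mul_div_pow_succ n
end

section
/- Let R = Q[[q]][L] with the derivation theta extending theta = q d/dq on Q[[q]] and satisfying theta(L) = 1 (L is a formal logarithm of q). Let f0 = sum over n >= 0 of ((4n)!/(n!)^4) q^n, and let f1 = f0 * L + 4 * sum over n >= 1 of ((4n)!/(n!)^4) * (H_{4n} - H_n) * q^n, where H_m = sum over j from 1 to m of 1/j. Then theta^3 f1 = 4 q (4 theta + 1)(4 theta + 2)(4 theta + 3) f1. -/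
/-!
Frobenius' method. Read coefficientwise, the equation `θ³ f = 4q(4θ+1)(4θ+2)(4θ+3) f` for
`f = ∑ a_n q^n` is the recurrence `(n+1)³ a_{n+1} = 4(4n+1)(4n+2)(4n+3) a_n`, solved by
`a_n = (4n)!/(n!)⁴`. The correction term of `f1` has coefficients
`∂_ε (4(n+ε))!/((n+ε)!)⁴ |_{ε=0} = 4 a_n (H_{4n} - H_n)`, and the `L`-free part of the
equation for `f0 L + g` is the `ε`-derivative of the recurrence; it reduces to
`(H_{4n+4} - H_{n+1}) - (H_{4n} - H_n) = 1/(4n+1) + 1/(4n+2) + 1/(4n+3) - 3/(4n+4)`.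
-/

open PowerSeries Polynomial

/-- The logarithmic derivation `θ = q d/dq` on `ℚ[[q]]`. -/
noncomputable def thetaQ (f : PowerSeries ℚ) : PowerSeries ℚ :=
  PowerSeries.mk fun n => (n : ℚ) * PowerSeries.coeff n f

/-- The derivation `θ` on `R = ℚ[[q]][L]` extending `q d/dq` with `θ(L) = 1`. -/
noncomputable def thetaR (p : Polynomial (PowerSeries ℚ)) : Polynomial (PowerSeries ℚ) :=
  p.sum (fun i a => Polynomial.C (thetaQ a) * Polynomial.X ^ i) + Polynomial.derivative p

/-- The operator `4θ + k` on `R`. -/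
noncomputable def op4R (k : ℕ) (p : Polynomial (PowerSeries ℚ)) : Polynomial (PowerSeries ℚ) :=
  4 • thetaR p + Polynomial.C (PowerSeries.C (k : ℚ)) * p

/-- Harmonic number `H_m = ∑_{j=1}^m 1/j`. -/
def harmonic' (m : ℕ) : ℚ := ∑ j ∈ Finset.range m, 1 / ((j : ℚ) + 1)

/-- The holomorphic solution `f0 = ∑ ((4n)!/(n!)^4) q^n`, regarded in `R`. -/
noncomputable def f0R : Polynomial (PowerSeries ℚ) :=
  Polynomial.C (PowerSeries.mk fun n : ℕ =>
    (Nat.factorial (4 * n) : ℚ) / (Nat.factorial n : ℚ) ^ 4)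

/-- The logarithmic solution
`f1 = f0 · L + 4 ∑_{n ≥ 1} ((4n)!/(n!)^4) (H_{4n} - H_n) q^n`. -/
noncomputable def f1R : Polynomial (PowerSeries ℚ) :=
  f0R * Polynomial.X +
    Polynomial.C (4 * PowerSeries.mk fun n : ℕ =>
      if n = 0 then 0 else
        ((Nat.factorial (4 * n) : ℚ) / (Nat.factorial n : ℚ) ^ 4) *
          (harmonic' (4 * n) - harmonic' n))

noncomputable def affineInL (a b : PowerSeries ℚ) : Polynomial (PowerSeries ℚ) :=
  Polynomial.C a + Polynomial.C b * Polynomial.X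

noncomputable def op4Q (k : ℕ) (f : PowerSeries ℚ) : PowerSeries ℚ :=
  4 • thetaQ f + PowerSeries.C (k : ℚ) * f

lemma coeff_thetaQ (n : ℕ) (f : PowerSeries ℚ) : coeff n (thetaQ f) = n * coeff n f :=
  coeff_mk _ _

@[simp]
lemma constantCoeff_thetaQ (f : PowerSeries ℚ) : constantCoeff (thetaQ f) = 0 := by
  rw [← coeff_zero_eq_constantCoeff_apply, coeff_thetaQ, Nat.cast_zero, zero_mul]

lemma coeff_op4Q (k n : ℕ) (f : PowerSeries ℚ) :
    coeff n (op4Q k f) = (4 * n + k) * coeff n f := by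
  simp only [op4Q, map_add, map_nsmul, PowerSeries.coeff_C_mul, coeff_thetaQ]
  rw [nsmul_eq_mul]
  push_cast
  ring

lemma thetaQ_add (f g : PowerSeries ℚ) : thetaQ (f + g) = thetaQ f + thetaQ g := by
  ext n
  simp only [coeff_thetaQ, map_add, mul_add]

lemma thetaQ_zero : thetaQ 0 = 0 := by
  ext n
  rw [coeff_thetaQ, map_zero, mul_zero]

lemma thetaR_affineInL (a b : PowerSeries ℚ) :
    thetaR (affineInL a b) = affineInL (thetaQ a + b) (thetaQ b) := by
  rw [thetaR, affineInL,
    sum_add_index _ _ _ (by simp [thetaQ_zero]) (by simp [thetaQ_add, add_mul]),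
    sum_C_index (by simp [thetaQ_zero]), C_mul_X_eq_monomial,
    sum_monomial_index _ _ (by simp [thetaQ_zero]), ← C_mul_X_eq_monomial, derivative_add,
    Polynomial.derivative_C, derivative_C_mul_X, affineInL, map_add]
  ring

lemma op4R_affineInL (k : ℕ) (a b : PowerSeries ℚ) :
    op4R k (affineInL a b) = affineInL (op4Q k a + 4 • b) (op4Q k b) := by
  rw [op4R, thetaR_affineInL]
  simp only [affineInL, op4Q, map_add, map_mul, map_nsmul, smul_add]
  ring

lemma C_mul_affineInL (c a b : PowerSeries ℚ) :
    Polynomial.C c * affineInL a b = affineInL (c * a) (c * b) := by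
  simp only [affineInL, map_mul]
  ring

lemma nsmul_affineInL (m : ℕ) (a b : PowerSeries ℚ) :
    m • affineInL a b = affineInL (m • a) (m • b) := by
  simp only [affineInL, smul_add, ← smul_mul_assoc, Polynomial.smul_C]

/-- With `P(θ) = θ³` and `Q(θ) = 4(4θ+1)(4θ+2)(4θ+3)` one has
`P(θ)(g + aL) = P(θ)g + P'(θ)a + P(θ)a · L`, so the coefficients of `q^{n+1} L` and `q^{n+1}`
in `P(θ)f = q Q(θ)f` are `P(n+1) a_{n+1} = Q(n) a_n` and
`P(n+1) g_{n+1} + P'(n+1) a_{n+1} = Q(n) g_n + Q'(n) a_n`. -/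
lemma picardFuchs_of_coeff_recurrence (a g : ℕ → ℚ)
    (ha : ∀ n : ℕ, ((n : ℚ) + 1) ^ 3 * a (n + 1) =
      4 * (4 * n + 1) * (4 * n + 2) * (4 * n + 3) * a n)
    (hg : ∀ n : ℕ, ((n : ℚ) + 1) ^ 3 * g (n + 1) + 3 * ((n : ℚ) + 1) ^ 2 * a (n + 1) =
      4 * ((4 * n + 1) * (4 * n + 2) * (4 * n + 3) * g n +
        4 * ((4 * n + 2) * (4 * n + 3) + (4 * n + 1) * (4 * n + 3) + (4 * n + 1) * (4 * n + 2)) *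
          a n)) :
    thetaR (thetaR (thetaR (affineInL (mk g) (mk a)))) =
      4 • (Polynomial.C (PowerSeries.X : PowerSeries ℚ) *
        op4R 1 (op4R 2 (op4R 3 (affineInL (mk g) (mk a))))) := by
  simp only [thetaR_affineInL, op4R_affineInL, C_mul_affineInL, nsmul_affineInL]
  congr 1 <;> ext (_ | n)
  · simp
  · simp only [coeff_thetaQ, coeff_op4Q, map_add, map_nsmul, coeff_succ_X_mul, coeff_mk]
    simp only [nsmul_eq_mul]
    push_cast
    linear_combination hg n
  · simp
  · simp only [coeff_thetaQ, coeff_op4Q, map_nsmul, coeff_succ_X_mul, coeff_mk]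
    simp only [nsmul_eq_mul]
    push_cast
    linear_combination ha n

noncomputable def quarticCoeff (n : ℕ) : ℚ :=
  (Nat.factorial (4 * n) : ℚ) / (Nat.factorial n : ℚ) ^ 4

noncomputable def quarticLogCoeff (n : ℕ) : ℚ :=
  4 * quarticCoeff n * (harmonic' (4 * n) - harmonic' n)

lemma quarticCoeff_succ (n : ℕ) :
    ((n : ℚ) + 1) ^ 3 * quarticCoeff (n + 1) =
      4 * (4 * n + 1) * (4 * n + 2) * (4 * n + 3) * quarticCoeff n := by
  have hfac : Nat.factorial (4 * (n + 1)) =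
      (4 * n + 4) * (4 * n + 3) * (4 * n + 2) * (4 * n + 1) * Nat.factorial (4 * n) := by
    rw [show 4 * (n + 1) = 4 * n + 3 + 1 by ring]
    simp only [Nat.factorial_succ]
    ring
  have hn : (Nat.factorial n : ℚ) ≠ 0 := Nat.cast_ne_zero.mpr n.factorial_ne_zero
  simp only [quarticCoeff, hfac, Nat.factorial_succ]
  push_cast
  field_simp

lemma harmonic'_succ (m : ℕ) : harmonic' (m + 1) = harmonic' m + 1 / ((m : ℚ) + 1) :=
  Finset.sum_range_succ _ _

lemma harmonic'_four_mul_succ_sub (n : ℕ) :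
    harmonic' (4 * (n + 1)) - harmonic' (n + 1) =
      harmonic' (4 * n) - harmonic' n +
        (1 / (4 * n + 1) + 1 / (4 * n + 2) + 1 / (4 * n + 3) - 3 / (4 * (n + 1))) := by
  rw [show 4 * (n + 1) = 4 * n + 3 + 1 by ring]
  simp only [harmonic'_succ]
  push_cast
  have : (n : ℚ) + 1 ≠ 0 := n.cast_add_one_ne_zero
  field_simp
  ring

lemma quarticLogCoeff_succ (n : ℕ) :
    ((n : ℚ) + 1) ^ 3 * quarticLogCoeff (n + 1) + 3 * ((n : ℚ) + 1) ^ 2 * quarticCoeff (n + 1) =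
      4 * ((4 * n + 1) * (4 * n + 2) * (4 * n + 3) * quarticLogCoeff n +
        4 * ((4 * n + 2) * (4 * n + 3) + (4 * n + 1) * (4 * n + 3) + (4 * n + 1) * (4 * n + 2)) *
          quarticCoeff n) := by
  set F : ℚ := 1 / (4 * n + 1) + 1 / (4 * n + 2) + 1 / (4 * n + 3) - 3 / (4 * (n + 1))
    with hF_def
  have hF : 4 * ((n : ℚ) + 1) * ((4 * n + 1) * (4 * n + 2) * (4 * n + 3)) * F =
      4 * (n + 1) *
          ((4 * n + 2) * (4 * n + 3) + (4 * n + 1) * (4 * n + 3) + (4 * n + 1) * (4 * n + 2)) -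
        3 * ((4 * n + 1) * (4 * n + 2) * (4 * n + 3)) := by
    have : (n : ℚ) + 1 ≠ 0 := n.cast_add_one_ne_zero
    rw [hF_def]
    field_simp
  simp only [quarticLogCoeff, harmonic'_four_mul_succ_sub]
  set c := harmonic' (4 * n) - harmonic' n
  apply mul_left_cancel₀ n.cast_add_one_ne_zero
  linear_combination
    (4 * ((n : ℚ) + 1) * (c + F) + 3) * quarticCoeff_succ n + 4 * quarticCoeff n * hF

lemma f1R_eq_affineInL : f1R = affineInL (mk quarticLogCoeff) (mk quarticCoeff) := by
  have hlog : (4 * PowerSeries.mk fun n : ℕ =>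
      if n = 0 then 0 else
        ((Nat.factorial (4 * n) : ℚ) / (Nat.factorial n : ℚ) ^ 4) *
          (harmonic' (4 * n) - harmonic' n)) = mk quarticLogCoeff := by
    rw [← map_ofNat PowerSeries.C 4]
    ext (_ | n) <;> simp [quarticLogCoeff, quarticCoeff, harmonic', mul_assoc]
  rw [f1R, f0R, hlog, affineInL, add_comm]
  rfl

/-- `f1` satisfies the Picard-Fuchs equation
`θ^3 f1 = 4 q (4θ+1)(4θ+2)(4θ+3) f1` in `R = ℚ[[q]][L]`. -/
theorem quartic_K3_log_solution :
    thetaR (thetaR (thetaR f1R)) =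
      4 • (Polynomial.C (PowerSeries.X : PowerSeries ℚ) *
        op4R 1 (op4R 2 (op4R 3 f1R))) := by
  rw [f1R_eq_affineInL]
  exact picardFuchs_of_coeff_recurrence _ _ quarticCoeff_succ quarticLogCoeff_succ
end
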